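/- Let X and Y be compact convex subsets of ℝ², and let v, u ∈ ℝ². Then the function f : ℝ → ℝ defined by f(x) = area(X ∩ (v + x·u + Y)) is quasiconcave, i.e., for all reals x₁ ≤ x₂ ≤ x₃ one has f(x₂) ≥ min(f(x₁), f(x₃)). Equivalently, the restriction of the overlap function of X and Y to any line is unimodal. -/

import Mathlib

/-!
The sets `A t = X ∩ (t +ᵥ Y)` satisfy `a • A t₁ + b • A t₂ ⊆ A (a • t₁ + b • t₂)` by convexity, so
it suffices to prove the weak Brunn–Minkowski inequality `min |A| |B| ≤ |C|` whenever
`a • A + b • B ⊆ C` for compact convex plane sets. Slice vertically: in dimension one,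
Brunn–Minkowski for intervals is an identity, so the slice lengths satisfy
`a f(x₁) + b g(x₂) ≤ h(a x₁ + b x₂)`. Normalising `f` and `g` by their maxima `p` and `q`, the
superlevel sets at each relative height `s < 1` again combine by one-dimensional
Brunn–Minkowski, and the layer-cake formula yields `a |A| / p + b |B| / q ≤ |C| / (a p + b q)`.
Convexity of `t ↦ t⁻¹` then gives `min |A| |B| ≤ |C|`.
-/

open MeasureTheory Pointwise

noncomputable section

abbrev Plane := EuclideanSpace ℝ (Fin 2)

open Set Bornology
open scoped ENNReal

theorem Convex.volume_eq_ofReal_sSup_sub_sInf {S : Set ℝ} (hS : Convex ℝ S) (hne : S.Nonempty)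
    (hb : IsBounded S) : volume S = ENNReal.ofReal (sSup S - sInf S) := by
  obtain ⟨hbl, hbu⟩ := isBounded_iff_bddBelow_bddAbove.1 hb
  refine le_antisymm ?_ ?_
  · calc volume S ≤ volume (Icc (sInf S) (sSup S)) :=
          measure_mono (subset_Icc_csInf_csSup hbl hbu)
      _ = _ := Real.volume_Icc
  · calc ENNReal.ofReal (sSup S - sInf S) = volume (Ioo (sInf S) (sSup S)) :=
          Real.volume_Ioo.symm
      _ ≤ volume S := measure_mono ((hS.isConnected hne).Ioo_csInf_csSup_subset hbl hbu)

theorem Convex.volume_add {S T : Set ℝ} (hS : Convex ℝ S) (hT : Convex ℝ T)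
    (hSne : S.Nonempty) (hTne : T.Nonempty) (hSb : IsBounded S) (hTb : IsBounded T) :
    volume (S + T) = volume S + volume T := by
  obtain ⟨hSl, hSu⟩ := isBounded_iff_bddBelow_bddAbove.1 hSb
  obtain ⟨hTl, hTu⟩ := isBounded_iff_bddBelow_bddAbove.1 hTb
  rw [(hS.add hT).volume_eq_ofReal_sSup_sub_sInf (hSne.add hTne) (hSb.add hTb),
    hS.volume_eq_ofReal_sSup_sub_sInf hSne hSb, hT.volume_eq_ofReal_sSup_sub_sInf hTne hTb,
    csSup_add hSne hSu hTne hTu, csInf_add hSne hSl hTne hTl,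
    ← ENNReal.ofReal_add (sub_nonneg.2 (csInf_le_csSup hSne hSl hSu))
      (sub_nonneg.2 (csInf_le_csSup hTne hTl hTu)), add_sub_add_comm]

theorem Convex.volume_smul_add_smul {S T : Set ℝ} (hS : Convex ℝ S) (hT : Convex ℝ T)
    (hSne : S.Nonempty) (hTne : T.Nonempty) (hSb : IsBounded S) (hTb : IsBounded T)
    {a b : ℝ} (ha : 0 ≤ a) (hb : 0 ≤ b) :
    volume (a • S + b • T) = ENNReal.ofReal a * volume S + ENNReal.ofReal b * volume T := by
  rw [(hS.smul a).volume_add (hT.smul b) hSne.smul_set hTne.smul_set (hSb.smul₀ a) (hTb.smul₀ b),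
    Measure.addHaar_smul, Measure.addHaar_smul, Module.finrank_self, pow_one, pow_one,
    abs_of_nonneg ha, abs_of_nonneg hb]

def sliceVol (S : Set (ℝ × ℝ)) (x : ℝ) : ℝ := (volume (Prod.mk x ⁻¹' S)).toReal

def maxSliceVol (S : Set (ℝ × ℝ)) : ℝ := ⨆ x, sliceVol S x

theorem sliceVol_nonneg (S : Set (ℝ × ℝ)) (x : ℝ) : 0 ≤ sliceVol S x := ENNReal.toReal_nonneg

section Slices

variable {S : Set (ℝ × ℝ)}

theorem IsCompact.prodMk_preimage (hS : IsCompact S) (x : ℝ) : IsCompact (Prod.mk x ⁻¹' S) :=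
  (hS.image continuous_snd).of_isClosed_subset (hS.isClosed.preimage (.prodMk_right x))
    fun y hy => ⟨(x, y), hy, rfl⟩

theorem Convex.prodMk_preimage (hS : Convex ℝ S) (x : ℝ) : Convex ℝ (Prod.mk x ⁻¹' S) :=
  hS.affine_preimage ((AffineMap.const ℝ ℝ x).prod (AffineMap.id ℝ ℝ))

theorem measurable_sliceVol (hS : MeasurableSet S) : Measurable (sliceVol S) :=
  (measurable_measure_prodMk_left hS).ennreal_toReal

theorem volume_eq_lintegral_sliceVol (hS : IsCompact S) :
    volume S = ∫⁻ x, ENNReal.ofReal (sliceVol S x) := by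
  rw [Measure.volume_eq_prod, Measure.prod_apply hS.isClosed.measurableSet]
  exact lintegral_congr fun x =>
    (ENNReal.ofReal_toReal (hS.prodMk_preimage x).measure_ne_top).symm

theorem nonempty_slice_of_sliceVol_pos {x : ℝ} (hx : 0 < sliceVol S x) :
    (Prod.mk x ⁻¹' S).Nonempty :=
  nonempty_of_measure_ne_zero (μ := volume) fun h => by simp [sliceVol, h] at hx

theorem sliceVol_le_maxSliceVol (hS : IsCompact S) (x : ℝ) : sliceVol S x ≤ maxSliceVol S := by
  refine le_ciSup ⟨(volume (Prod.snd '' S)).toReal, ?_⟩ x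
  rintro _ ⟨y, rfl⟩
  exact ENNReal.toReal_mono (hS.image continuous_snd).measure_ne_top
    (measure_mono fun z hz => ⟨(y, z), hz, rfl⟩)

theorem maxSliceVol_pos (hS : IsCompact S) (h : volume S ≠ 0) : 0 < maxSliceVol S := by
  by_contra! hM
  refine h ((volume_eq_lintegral_sliceVol hS).trans ?_)
  simp [ENNReal.ofReal_eq_zero.2 ((sliceVol_le_maxSliceVol hS _).trans hM)]

theorem volume_mul_ofReal_inv_eq_lintegral (hS : IsCompact S) {c : ℝ} (hc : 0 < c) :
    volume S * ENNReal.ofReal c⁻¹ = ∫⁻ s in Ioi 0, volume {x | s * c < sliceVol S x} := by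
  have hmeas := measurable_sliceVol hS.isClosed.measurableSet
  rw [volume_eq_lintegral_sliceVol hS, ← lintegral_mul_const _ hmeas.ennreal_ofReal]
  simp_rw [← ENNReal.ofReal_mul (sliceVol_nonneg S _), ← div_eq_mul_inv]
  rw [lintegral_eq_lintegral_meas_lt _
    (ae_of_all _ fun x => div_nonneg (sliceVol_nonneg S x) hc.le) (hmeas.div_const c).aemeasurable]
  simp_rw [lt_div_iff₀ hc]

end Slices

theorem sliceVol_smul_add_smul_le {A B C : Set (ℝ × ℝ)} (hA : IsCompact A) (hAc : Convex ℝ A)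
    (hB : IsCompact B) (hBc : Convex ℝ B) (hC : IsCompact C) {a b : ℝ} (ha : 0 ≤ a) (hb : 0 ≤ b)
    (hsub : a • A + b • B ⊆ C) {x₁ x₂ : ℝ} (h₁ : (Prod.mk x₁ ⁻¹' A).Nonempty)
    (h₂ : (Prod.mk x₂ ⁻¹' B).Nonempty) :
    a * sliceVol A x₁ + b * sliceVol B x₂ ≤ sliceVol C (a * x₁ + b * x₂) := by
  have hslice : a • (Prod.mk x₁ ⁻¹' A) + b • (Prod.mk x₂ ⁻¹' B) ⊆
      Prod.mk (a * x₁ + b * x₂) ⁻¹' C := by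
    rintro _ ⟨_, ⟨y₁, hy₁, rfl⟩, _, ⟨y₂, hy₂, rfl⟩, rfl⟩
    simpa using
      hsub (add_mem_add (smul_mem_smul_set (a := a) hy₁) (smul_mem_smul_set (a := b) hy₂))
  have hvol := ((hAc.prodMk_preimage x₁).volume_smul_add_smul (hBc.prodMk_preimage x₂) h₁ h₂
    (hA.prodMk_preimage x₁).isBounded (hB.prodMk_preimage x₂).isBounded ha hb).symm.trans_le
    (measure_mono hslice)
  have := ENNReal.toReal_mono (hC.prodMk_preimage _).measure_ne_top hvol
  rwa [ENNReal.toReal_add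
      (ENNReal.mul_ne_top ENNReal.ofReal_ne_top (hA.prodMk_preimage x₁).measure_ne_top)
      (ENNReal.mul_ne_top ENNReal.ofReal_ne_top (hB.prodMk_preimage x₂).measure_ne_top),
    ENNReal.toReal_mul, ENNReal.toReal_mul, ENNReal.toReal_ofReal ha,
    ENNReal.toReal_ofReal hb] at this

theorem convex_setOf_lt_sliceVol {A : Set (ℝ × ℝ)} (hA : IsCompact A) (hAc : Convex ℝ A) {t : ℝ}
    (ht : 0 ≤ t) : Convex ℝ {x | t < sliceVol A x} := by
  intro x₁ hx₁ x₂ hx₂ a b ha hb hab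
  calc t < min (sliceVol A x₁) (sliceVol A x₂) := lt_min hx₁ hx₂
    _ = a * min (sliceVol A x₁) (sliceVol A x₂) + b * min (sliceVol A x₁) (sliceVol A x₂) := by
      rw [← add_mul, hab, one_mul]
    _ ≤ a * sliceVol A x₁ + b * sliceVol A x₂ := by gcongr <;> simp
    _ ≤ sliceVol A (a * x₁ + b * x₂) :=
      sliceVol_smul_add_smul_le hA hAc hA hAc hA ha hb (hAc.set_combo_subset ha hb hab)
        (nonempty_slice_of_sliceVol_pos (ht.trans_lt hx₁))
        (nonempty_slice_of_sliceVol_pos (ht.trans_lt hx₂))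

theorem isBounded_setOf_lt_sliceVol {A : Set (ℝ × ℝ)} (hA : IsCompact A) {t : ℝ} (ht : 0 ≤ t) :
    IsBounded {x | t < sliceVol A x} :=
  (hA.image continuous_fst).isBounded.subset fun x hx =>
    (nonempty_slice_of_sliceVol_pos (ht.trans_lt hx)).elim fun y hy => ⟨(x, y), hy, rfl⟩

theorem smul_add_smul_setOf_lt_sliceVol_subset {A B C : Set (ℝ × ℝ)} (hA : IsCompact A)
    (hAc : Convex ℝ A) (hB : IsCompact B) (hBc : Convex ℝ B) (hC : IsCompact C) {a b : ℝ}
    (ha : 0 < a) (hb : 0 ≤ b) (hsub : a • A + b • B ⊆ C) {s t : ℝ} (hs : 0 ≤ s) (ht : 0 ≤ t) :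
    a • {x | s < sliceVol A x} + b • {x | t < sliceVol B x} ⊆
      {x | a * s + b * t < sliceVol C x} := by
  rintro _ ⟨_, ⟨x₁, hx₁, rfl⟩, _, ⟨x₂, hx₂, rfl⟩, rfl⟩
  calc a * s + b * t < a * sliceVol A x₁ + b * sliceVol B x₂ :=
        add_lt_add_of_lt_of_le (mul_lt_mul_of_pos_left hx₁ ha)
          (mul_le_mul_of_nonneg_left hx₂.le hb)
    _ ≤ sliceVol C (a * x₁ + b * x₂) :=
      sliceVol_smul_add_smul_le hA hAc hB hBc hC ha.le hb hsub
        (nonempty_slice_of_sliceVol_pos (hs.trans_lt hx₁))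
        (nonempty_slice_of_sliceVol_pos (ht.trans_lt hx₂))

theorem setOf_mul_maxSliceVol_lt_sliceVol_eq_empty {S : Set (ℝ × ℝ)} (hS : IsCompact S) {s : ℝ}
    (hs : 1 ≤ s) : {x | s * maxSliceVol S < sliceVol S x} = ∅ := by
  have hM : 0 ≤ maxSliceVol S := (sliceVol_nonneg S 0).trans (sliceVol_le_maxSliceVol hS 0)
  refine eq_empty_of_forall_notMem fun x hx => (sliceVol_le_maxSliceVol hS x).not_gt ?_
  exact (le_mul_of_one_le_left hM hs).trans_lt hx

theorem nonempty_setOf_mul_maxSliceVol_lt_sliceVol {S : Set (ℝ × ℝ)} (hM : 0 < maxSliceVol S)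
    {s : ℝ} (hs : s < 1) : {x | s * maxSliceVol S < sliceVol S x}.Nonempty :=
  exists_lt_of_lt_ciSup (mul_lt_of_lt_one_left hM hs)

theorem volume_superlevel_combo_le {A B C : Set (ℝ × ℝ)} (hA : IsCompact A)
    (hAc : Convex ℝ A) (hB : IsCompact B) (hBc : Convex ℝ B) (hC : IsCompact C) {a b : ℝ}
    (ha : 0 < a) (hb : 0 ≤ b) (hsub : a • A + b • B ⊆ C) (hMA : 0 < maxSliceVol A)
    (hMB : 0 < maxSliceVol B) {s : ℝ} (hs : 0 < s) :
    ENNReal.ofReal a * volume {x | s * maxSliceVol A < sliceVol A x}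
        + ENNReal.ofReal b * volume {x | s * maxSliceVol B < sliceVol B x}
      ≤ volume {x | s * (a * maxSliceVol A + b * maxSliceVol B) < sliceVol C x} := by
  obtain hs1 | hs1 := lt_or_ge s 1
  · have hsA : 0 ≤ s * maxSliceVol A := by positivity
    have hsB : 0 ≤ s * maxSliceVol B := by positivity
    rw [← (convex_setOf_lt_sliceVol hA hAc hsA).volume_smul_add_smul
      (convex_setOf_lt_sliceVol hB hBc hsB) (nonempty_setOf_mul_maxSliceVol_lt_sliceVol hMA hs1)
      (nonempty_setOf_mul_maxSliceVol_lt_sliceVol hMB hs1) (isBounded_setOf_lt_sliceVol hA hsA)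
      (isBounded_setOf_lt_sliceVol hB hsB) ha.le hb]
    refine measure_mono ((smul_add_smul_setOf_lt_sliceVol_subset hA hAc hB hBc hC ha hb hsub
      hsA hsB).trans_eq ?_)
    simp only [mul_add, mul_left_comm]
  · simp [setOf_mul_maxSliceVol_lt_sliceVol_eq_empty hA hs1,
      setOf_mul_maxSliceVol_lt_sliceVol_eq_empty hB hs1]

theorem antitone_volume_setOf_mul_lt (f : ℝ → ℝ) {c : ℝ} (hc : 0 ≤ c) :
    Antitone fun s => volume {x | s * c < f x} := fun _ _ hst =>
  measure_mono fun _ hx => (mul_le_mul_of_nonneg_right hst hc).trans_lt hx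

theorem volume_div_maxSliceVol_combo_le {A B C : Set (ℝ × ℝ)} (hA : IsCompact A)
    (hAc : Convex ℝ A) (hB : IsCompact B) (hBc : Convex ℝ B) (hC : IsCompact C) {a b : ℝ}
    (ha : 0 < a) (hb : 0 ≤ b) (hsub : a • A + b • B ⊆ C) (hMA : 0 < maxSliceVol A)
    (hMB : 0 < maxSliceVol B) :
    ENNReal.ofReal a * (volume A * ENNReal.ofReal (maxSliceVol A)⁻¹)
        + ENNReal.ofReal b * (volume B * ENNReal.ofReal (maxSliceVol B)⁻¹)
      ≤ volume C * ENNReal.ofReal (a * maxSliceVol A + b * maxSliceVol B)⁻¹ := by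
  have hM : 0 < a * maxSliceVol A + b * maxSliceVol B := by positivity
  rw [volume_mul_ofReal_inv_eq_lintegral hA hMA, volume_mul_ofReal_inv_eq_lintegral hB hMB,
    volume_mul_ofReal_inv_eq_lintegral hC hM,
    ← lintegral_const_mul _ (antitone_volume_setOf_mul_lt _ hMA.le).measurable,
    ← lintegral_const_mul _ (antitone_volume_setOf_mul_lt _ hMB.le).measurable,
    ← lintegral_add_left ((antitone_volume_setOf_mul_lt _ hMA.le).measurable.const_mul _)]
  exact setLIntegral_mono (antitone_volume_setOf_mul_lt _ hM.le).measurable fun s hs =>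
    volume_superlevel_combo_le hA hAc hB hBc hC ha hb hsub hMA hMB hs

theorem min_le_of_combo_mul_inv_le {x y z : ℝ≥0∞} {a b p q : ℝ} (ha : 0 < a) (hb : 0 ≤ b)
    (hab : a + b = 1) (hp : 0 < p) (hq : 0 < q)
    (h : ENNReal.ofReal a * (x * ENNReal.ofReal p⁻¹) + ENNReal.ofReal b * (y * ENNReal.ofReal q⁻¹)
      ≤ z * ENNReal.ofReal (a * p + b * q)⁻¹) :
    min x y ≤ z := by
  have hM : 0 < a * p + b * q := by positivity
  have hinv : (a * p + b * q)⁻¹ ≤ a * p⁻¹ + b * q⁻¹ := by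
    simpa using (convexOn_zpow (𝕜 := ℝ) (-1)).2 hp hq ha.le hb hab
  refine (ENNReal.mul_le_mul_iff_left (c := ENNReal.ofReal (a * p + b * q)⁻¹) (by simpa using hM)
    ENNReal.ofReal_ne_top).1 (le_trans ?_ h)
  calc min x y * ENNReal.ofReal (a * p + b * q)⁻¹
      ≤ min x y * (ENNReal.ofReal a * ENNReal.ofReal p⁻¹
          + ENNReal.ofReal b * ENNReal.ofReal q⁻¹) := by
        rw [← ENNReal.ofReal_mul ha.le, ← ENNReal.ofReal_mul hb,
          ← ENNReal.ofReal_add (by positivity) (by positivity)]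
        gcongr
    _ = ENNReal.ofReal a * (min x y * ENNReal.ofReal p⁻¹)
          + ENNReal.ofReal b * (min x y * ENNReal.ofReal q⁻¹) := by ring
    _ ≤ _ := by gcongr <;> simp

theorem min_volume_le_of_smul_add_smul_subset {A B C : Set (ℝ × ℝ)} (hA : IsCompact A)
    (hAc : Convex ℝ A) (hB : IsCompact B) (hBc : Convex ℝ B) (hC : IsCompact C) {a b : ℝ}
    (ha : 0 < a) (hb : 0 ≤ b) (hab : a + b = 1) (hsub : a • A + b • B ⊆ C) :
    min (volume A) (volume B) ≤ volume C := by
  rcases eq_or_ne (volume A) 0 with hA0 | hA0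
  · simp [hA0]
  rcases eq_or_ne (volume B) 0 with hB0 | hB0
  · simp [hB0]
  have hMA := maxSliceVol_pos hA hA0
  have hMB := maxSliceVol_pos hB hB0
  exact min_le_of_combo_mul_inv_le ha hb hab hMA hMB
    (volume_div_maxSliceVol_combo_le hA hAc hB hBc hC ha hb hsub hMA hMB)

def prodToPlane : (ℝ × ℝ) ≃L[ℝ] Plane :=
  (ContinuousLinearEquiv.finTwoArrow ℝ ℝ).symm.trans (EuclideanSpace.equiv (Fin 2) ℝ).symm

theorem measurePreserving_prodToPlane : MeasurePreserving prodToPlane :=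
  (PiLp.volume_preserving_toLp (Fin 2)).comp (volume_preserving_finTwoArrow ℝ).symm

theorem min_volume_le_of_smul_add_smul_subset_plane {A B C : Set Plane} (hA : IsCompact A)
    (hAc : Convex ℝ A) (hB : IsCompact B) (hBc : Convex ℝ B) (hC : IsCompact C) {a b : ℝ}
    (ha : 0 < a) (hb : 0 ≤ b) (hab : a + b = 1) (hsub : a • A + b • B ⊆ C) :
    min (volume A) (volume B) ≤ volume C := by
  have hpre : ∀ {S : Set Plane}, IsCompact S → IsCompact (prodToPlane ⁻¹' S) := fun hS =>
    prodToPlane.toHomeomorph.isCompact_preimage.2 hS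
  have hvol : ∀ {S : Set Plane}, IsCompact S → volume (prodToPlane ⁻¹' S) = volume S := fun hS =>
    measurePreserving_prodToPlane.measure_preimage hS.isClosed.measurableSet.nullMeasurableSet
  have hsub' : a • (prodToPlane ⁻¹' A) + b • (prodToPlane ⁻¹' B) ⊆ prodToPlane ⁻¹' C := by
    rintro _ ⟨_, ⟨p, hp, rfl⟩, _, ⟨q, hq, rfl⟩, rfl⟩
    simpa using
      hsub (add_mem_add (smul_mem_smul_set (a := a) hp) (smul_mem_smul_set (a := b) hq))
  simpa only [hvol hA, hvol hB, hvol hC] using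
    min_volume_le_of_smul_add_smul_subset (hpre hA) (hAc.linear_preimage prodToPlane.toLinearMap)
      (hpre hB) (hBc.linear_preimage prodToPlane.toLinearMap) (hpre hC) ha hb hab hsub'

theorem Convex.smul_add_smul_inter_vadd_subset {E : Type*} [AddCommGroup E] [Module ℝ E]
    {X Y : Set E} (hX : Convex ℝ X) (hY : Convex ℝ Y) {a b : ℝ} (ha : 0 ≤ a) (hb : 0 ≤ b)
    (hab : a + b = 1) (t₁ t₂ : E) :
    a • (X ∩ (t₁ +ᵥ Y)) + b • (X ∩ (t₂ +ᵥ Y)) ⊆ X ∩ ((a • t₁ + b • t₂) +ᵥ Y) := by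
  rintro _ ⟨_, ⟨p, ⟨hpX, y₁, hy₁, rfl⟩, rfl⟩, _, ⟨q, ⟨hqX, y₂, hy₂, rfl⟩, rfl⟩, rfl⟩
  refine ⟨hX hpX hqX ha hb hab, a • y₁ + b • y₂, hY hy₁ hy₂ ha hb hab, ?_⟩
  simp only [vadd_eq_add]
  module

theorem overlap_unimodal_on_lines (X Y : Set Plane)
    (hXcomp : IsCompact X) (hXconv : Convex ℝ X)
    (hYcomp : IsCompact Y) (hYconv : Convex ℝ Y) (v u : Plane) :
    ∀ x₁ x₂ x₃ : ℝ, x₁ ≤ x₂ → x₂ ≤ x₃ →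
      min (volume (X ∩ ((v + x₁ • u) +ᵥ Y))) (volume (X ∩ ((v + x₃ • u) +ᵥ Y)))
        ≤ volume (X ∩ ((v + x₂ • u) +ᵥ Y)) := by
  intro x₁ x₂ x₃ h₁₂ h₂₃
  rcases h₁₂.eq_or_lt with rfl | h₁₂
  · exact min_le_left _ _
  rcases h₂₃.eq_or_lt with rfl | h₂₃
  · exact min_le_right _ _
  obtain ⟨a, b, ha, hb, hab, rfl⟩ : x₂ ∈ openSegment ℝ x₁ x₃ := by
    rw [openSegment_eq_Ioo (h₁₂.trans h₂₃)]
    exact ⟨h₁₂, h₂₃⟩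
  have hcomp : ∀ t : Plane, IsCompact (X ∩ (t +ᵥ Y)) := fun t =>
    hXcomp.inter_right (hYcomp.vadd t).isClosed
  have hconv : ∀ t : Plane, Convex ℝ (X ∩ (t +ᵥ Y)) := fun t => hXconv.inter (hYconv.vadd t)
  have hline : v + (a • x₁ + b • x₃) • u = a • (v + x₁ • u) + b • (v + x₃ • u) := by
    linear_combination (norm := module) hab.symm • v
  rw [hline]
  exact min_volume_le_of_smul_add_smul_subset_plane (hcomp _) (hconv _) (hcomp _) (hconv _)
    (hcomp _) ha hb.le hab (hXconv.smul_add_smul_inter_vadd_subset hYconv ha.le hb.le hab _ _)
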